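/- arXiv:0903.0474 — 5 statements merged into one kernel-verified Lean document; each statement's English description precedes it below -/
import Mathlib

section
/- Let r : ℤ → ℝ be even with ∑_{k∈ℤ}(1+|k|)|r(k)| < ∞ and f(ω) = (2π)^{-1}∑_{k∈ℤ} r(k)e^{-ιkω}. Let {a_{k,n} : 1 ≤ k ≤ n−1}, n ≥ 2, be a triangular array of real weights with sup_n max_{1≤k≤n−1} |a_{k,n}| < ∞ and sup_n ∑_{k=2}^{n−1} |a_{k,n} − a_{k−1,n}| < ∞. Define A_n = ∑_{k=1}^{n−1} a_{k,n}²(1 − k/n)², H_n(ω) = ∑_{k=1}^{n−1} a_{k,n}(1 − k/n)e^{-ιkω}, and K_n(ω) = H_n(ω)H_n(−ω)/(2πA_n). If A_n → ∞ as n → ∞, then lim_{n→∞} ∫_{−π}^{π} K_n(ω) f(ω)² dω = f(0)². -/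
/-!
`K_n` is a nonnegative kernel of total mass one on `[-π, π]`, since orthogonality of the
exponentials gives `∫ |H_n|² = 2π A_n`. Summation by parts against `1 - e^{-iω}` gives
`|H_n(ω)| |1 - e^{-iω}| ≤ V + 3M`, where `M` bounds the weights and `V` their variation, so
`K_n(ω) = O(1 / (A_n sin² (δ/2)))` uniformly on `δ ≤ |ω| ≤ π`. As `A_n → ∞`, the `K_n` are
peak functions at `0`, hence `∫ K_n g → g(0)` for the continuous function `g = f²` (continuous
because `∑ |r(k)| < ∞`).
-/

open Complex Real Filter

/-- The spectral density `f(ω) = (2π)⁻¹ ∑_{k∈ℤ} r(k) e^{-ιkω}`, which is real-valued when `r`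
is even; we take the real part of the (real) complex series. -/
noncomputable def specDensity (r : ℤ → ℝ) (ω : ℝ) : ℝ :=
  ((2 * (Real.pi : ℂ))⁻¹ *
    ∑' k : ℤ, (r k : ℂ) * Complex.exp (-(Complex.I * (k : ℂ) * (ω : ℂ)))).re

/-- The smoothing window `H_n(ω) = ∑_{k=1}^{n-1} a_k (1 - k/n) e^{-ικω}` of a weight array. -/
noncomputable def smoothWindow (n : ℕ) (a : ℕ → ℝ) (ω : ℝ) : ℂ :=
  ∑ k ∈ Finset.Icc 1 (n - 1),
    ((a k * (1 - (k : ℝ) / (n : ℝ)) : ℝ) : ℂ) * Complex.exp (-(Complex.I * (k : ℂ) * (ω : ℂ)))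

/-- The normalizer `A_n = ∑_{k=1}^{n-1} a_{k,n}² (1 - k/n)²`. -/
noncomputable def normalizerA (n : ℕ) (a : ℕ → ℝ) : ℝ :=
  ∑ k ∈ Finset.Icc 1 (n - 1), (a k) ^ 2 * (1 - (k : ℝ) / (n : ℝ)) ^ 2

/-- The (real-valued) kernel `K_n(ω) = H_n(ω) H_n(-ω) / (2π A_n)`. -/
noncomputable def kernelK (n : ℕ) (a : ℕ → ℝ) (ω : ℝ) : ℝ :=
  (smoothWindow n a ω * smoothWindow n a (-ω)).re / (2 * Real.pi * normalizerA n a)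

open Topology

theorem sum_Icc_mul_pow_mul_one_sub {R : Type*} [CommRing R] (b : ℕ → R) (z : R) {N : ℕ}
    (hN : 1 ≤ N) :
    (∑ k ∈ Finset.Icc 1 N, b k * z ^ k) * (1 - z) =
      b 1 * z + ∑ k ∈ Finset.Icc 2 N, (b k - b (k - 1)) * z ^ k - b N * z ^ (N + 1) := by
  induction N, hN using Nat.le_induction with
  | base =>
    simp only [Finset.Icc_self, Finset.sum_singleton, Finset.Icc_eq_empty_of_lt one_lt_two,
      Finset.sum_empty]
    ring
  | succ N hN ih =>
    rw [Finset.sum_Icc_succ_top (by omega), Finset.sum_Icc_succ_top (by omega), add_mul, ih,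
      Nat.add_sub_cancel]
    ring

theorem norm_sum_Icc_mul_pow_mul_le {𝕜 : Type*} [NormedField 𝕜] (b : ℕ → 𝕜) {z : 𝕜}
    (hz : ‖z‖ ≤ 1) (N : ℕ) :
    ‖∑ k ∈ Finset.Icc 1 N, b k * z ^ k‖ * ‖1 - z‖ ≤
      ‖b 1‖ + ∑ k ∈ Finset.Icc 2 N, ‖b k - b (k - 1)‖ + ‖b N‖ := by
  rcases Nat.eq_zero_or_pos N with rfl | hN
  · simp only [Finset.Icc_eq_empty_of_lt zero_lt_one, Finset.sum_empty, norm_zero, zero_mul]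
    positivity
  have hterm : ∀ (c : 𝕜) (k : ℕ), ‖c * z ^ k‖ ≤ ‖c‖ := fun c k => by
    rw [norm_mul, norm_pow]
    exact mul_le_of_le_one_right (norm_nonneg c) (pow_le_one₀ (norm_nonneg z) hz)
  rw [← norm_mul, sum_Icc_mul_pow_mul_one_sub b z hN]
  refine (norm_sub_le _ _).trans (add_le_add ((norm_add_le _ _).trans (add_le_add ?_ ?_)) ?_)
  · simpa using hterm (b 1) 1
  · exact (norm_sum_le _ _).trans (Finset.sum_le_sum fun k _ => hterm _ k)
  · exact hterm _ _

theorem continuous_specDensity {r : ℤ → ℝ} (hr : Summable fun k : ℤ => |r k|) :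
    Continuous (specDensity r) := by
  refine Complex.continuous_re.comp (continuous_const.mul ?_)
  refine continuous_tsum (fun k => by fun_prop) hr fun k ω => ?_
  rw [norm_mul, Complex.norm_exp]
  simp

theorem smoothWindow_eq_sum_pow (n : ℕ) (a : ℕ → ℝ) (ω : ℝ) :
    smoothWindow n a ω = ∑ k ∈ Finset.Icc 1 (n - 1),
      ((a k * (1 - (k : ℝ) / n) : ℝ) : ℂ) * cexp (-(I * ω)) ^ k := by
  refine Finset.sum_congr rfl fun k _ => ?_
  rw [← Complex.exp_nat_mul]
  ring_nf

theorem smoothWindow_neg (n : ℕ) (a : ℕ → ℝ) (ω : ℝ) :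
    smoothWindow n a (-ω) = starRingEnd ℂ (smoothWindow n a ω) := by
  simp only [smoothWindow, map_sum, map_mul, Complex.conj_ofReal, ← Complex.exp_conj, map_neg,
    Complex.conj_I, Complex.conj_natCast, Complex.ofReal_neg]
  refine Finset.sum_congr rfl fun k _ => ?_
  ring_nf

theorem continuous_smoothWindow (n : ℕ) (a : ℕ → ℝ) : Continuous (smoothWindow n a) := by
  unfold smoothWindow
  fun_prop

theorem normalizerA_nonneg (n : ℕ) (a : ℕ → ℝ) : 0 ≤ normalizerA n a :=
  Finset.sum_nonneg fun _ _ => by positivity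

theorem smoothWindow_mul_neg (n : ℕ) (a : ℕ → ℝ) (ω : ℝ) :
    smoothWindow n a ω * smoothWindow n a (-ω) = ((‖smoothWindow n a ω‖ ^ 2 : ℝ) : ℂ) := by
  rw [smoothWindow_neg, Complex.mul_conj, Complex.normSq_eq_norm_sq]

theorem kernelK_eq (n : ℕ) (a : ℕ → ℝ) (ω : ℝ) :
    kernelK n a ω = ‖smoothWindow n a ω‖ ^ 2 / (2 * π * normalizerA n a) := by
  rw [kernelK, smoothWindow_mul_neg, Complex.ofReal_re]

theorem kernelK_nonneg (n : ℕ) (a : ℕ → ℝ) (ω : ℝ) : 0 ≤ kernelK n a ω := by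
  rw [kernelK_eq]
  have := normalizerA_nonneg n a
  positivity

theorem continuous_kernelK (n : ℕ) (a : ℕ → ℝ) : Continuous (kernelK n a) := by
  unfold kernelK
  have := continuous_smoothWindow n a
  fun_prop

theorem integral_exp_I_int_mul (m : ℤ) :
    ∫ ω in -π..π, cexp (I * m * ω) = if m = 0 then 2 * (π : ℂ) else 0 := by
  split_ifs with hm
  · simp [hm, two_mul]
  have hc : I * m ≠ 0 := by simp [Complex.I_ne_zero, hm]
  have hperiodic : cexp (I * m * π) = cexp (I * m * (-π : ℝ)) := by
    rw [show I * m * π = I * m * (-π : ℝ) + m * (2 * π * I) by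
      push_cast; ring, Complex.exp_add, Complex.exp_int_mul_two_pi_mul_I, mul_one]
  rw [integral_exp_mul_complex hc, hperiodic, sub_self, zero_div]

theorem integral_trigPoly_mul_neg (s : Finset ℕ) (c : ℕ → ℂ) :
    ∫ ω in -π..π, (∑ j ∈ s, c j * cexp (-(I * j * ω))) *
        ∑ k ∈ s, c k * cexp (-(I * k * (-ω : ℝ))) =
      2 * π * ∑ k ∈ s, c k ^ 2 := by
  have hprod : ∀ ω : ℝ, (∑ j ∈ s, c j * cexp (-(I * j * ω))) *
      ∑ k ∈ s, c k * cexp (-(I * k * (-ω : ℝ))) =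
      ∑ j ∈ s, ∑ k ∈ s, c j * c k * cexp (I * ((k : ℤ) - j : ℤ) * ω) := by
    intro ω
    rw [Finset.sum_mul_sum]
    refine Finset.sum_congr rfl fun j _ => Finset.sum_congr rfl fun k _ => ?_
    rw [mul_mul_mul_comm, ← Complex.exp_add]
    push_cast
    ring_nf
  have hterm : ∀ j k : ℕ, ∫ ω in -π..π, c j * c k * cexp (I * ((k : ℤ) - j : ℤ) * ω)
      = if j = k then 2 * π * c k ^ 2 else 0 := by
    intro j k
    rw [intervalIntegral.integral_const_mul, integral_exp_I_int_mul]
    rcases eq_or_ne j k with rfl | h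
    · simp only [sub_self, if_true]
      ring
    · simp [sub_eq_zero, h, Ne.symm h]
  have hcont : ∀ (j k : ℕ), Continuous fun ω : ℝ =>
      c j * c k * cexp (I * ((k : ℤ) - j : ℤ) * ω) := fun j k => by fun_prop
  simp_rw [hprod]
  rw [intervalIntegral.integral_finsetSum fun j _ =>
    (continuous_finsetSum _ fun k _ => hcont j k).intervalIntegrable _ _, Finset.mul_sum]
  refine Finset.sum_congr rfl fun j hj => ?_
  rw [intervalIntegral.integral_finsetSum fun k _ => (hcont j k).intervalIntegrable _ _,
    Finset.sum_congr rfl fun k _ => hterm j k, Finset.sum_ite_eq]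
  simp [hj]

theorem integral_sq_norm_smoothWindow (n : ℕ) (a : ℕ → ℝ) :
    ∫ ω in -π..π, ‖smoothWindow n a ω‖ ^ 2 = 2 * π * normalizerA n a := by
  apply Complex.ofReal_injective
  simp_rw [← intervalIntegral.integral_ofReal, ← smoothWindow_mul_neg, smoothWindow,
    integral_trigPoly_mul_neg, normalizerA]
  push_cast
  simp_rw [mul_pow]

theorem integral_kernelK {n : ℕ} {a : ℕ → ℝ} (hA : normalizerA n a ≠ 0) :
    ∫ ω in -π..π, kernelK n a ω = 1 := by
  simp_rw [kernelK_eq, intervalIntegral.integral_div, integral_sq_norm_smoothWindow]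
  exact div_self (by positivity)

theorem abs_one_sub_div_le_one {k n : ℕ} (hkn : k ≤ n) : |1 - (k : ℝ) / n| ≤ 1 := by
  have hdiv : (k : ℝ) / n ≤ 1 := div_le_one_of_le₀ (by exact_mod_cast hkn) n.cast_nonneg
  rw [abs_le]
  have : 0 ≤ (k : ℝ) / n := by positivity
  constructor <;> linarith

theorem abs_mul_one_sub_div_le (x : ℝ) {k n : ℕ} (hkn : k ≤ n) : |x * (1 - (k : ℝ) / n)| ≤ |x| := by
  rw [abs_mul]
  exact mul_le_of_le_one_right (abs_nonneg x) (abs_one_sub_div_le_one hkn)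

theorem abs_taper_sub_le (a : ℕ → ℝ) {k n : ℕ} (hk : 1 ≤ k) (hkn : k ≤ n) :
    |a k * (1 - (k : ℝ) / n) - a (k - 1) * (1 - ((k - 1 : ℕ) : ℝ) / n)| ≤
      |a k - a (k - 1)| + |a (k - 1)| / n := by
  have hn : (n : ℝ) ≠ 0 := by exact_mod_cast (by omega : n ≠ 0)
  have hsplit : a k * (1 - (k : ℝ) / n) - a (k - 1) * (1 - ((k - 1 : ℕ) : ℝ) / n) =
      (a k - a (k - 1)) * (1 - (k : ℝ) / n) - a (k - 1) / n := by
    rw [Nat.cast_sub hk]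
    field_simp
    ring
  rw [hsplit]
  refine (abs_sub _ _).trans (add_le_add (abs_mul_one_sub_div_le _ hkn) ?_)
  rw [abs_div, Nat.abs_cast]

/-- The boundary terms of the summation by parts contribute `2M`; the taper `1 - k/n` moves by
`1/n` per step, adding at most `M` to the variation. -/
theorem norm_smoothWindow_mul_le {n : ℕ} {a : ℕ → ℝ} {M V : ℝ}
    (hM : ∀ k ≤ n - 1, |a k| ≤ M) (hV : ∑ k ∈ Finset.Icc 2 (n - 1), |a k - a (k - 1)| ≤ V)
    (ω : ℝ) : ‖smoothWindow n a ω‖ * ‖1 - cexp (-(I * ω))‖ ≤ V + 3 * M := by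
  have hM0 : 0 ≤ M := (abs_nonneg _).trans (hM 0 (Nat.zero_le _))
  have hV0 : 0 ≤ V := (Finset.sum_nonneg fun _ _ => abs_nonneg _).trans hV
  rcases le_or_gt n 1 with hn | hn
  · simp only [smoothWindow, Nat.sub_eq_zero_of_le hn, Finset.Icc_eq_empty_of_lt zero_lt_one,
      Finset.sum_empty, norm_zero, zero_mul]
    positivity
  have hz : ‖cexp (-(I * ω))‖ ≤ 1 := by
    rw [Complex.norm_exp]
    simp
  refine (smoothWindow_eq_sum_pow n a ω ▸ norm_sum_Icc_mul_pow_mul_le _ hz _).trans ?_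
  simp only [← Complex.ofReal_sub, Complex.norm_real, Real.norm_eq_abs]
  have hfirst : |a 1 * (1 - ((1 : ℕ) : ℝ) / n)| ≤ M :=
    (abs_mul_one_sub_div_le _ hn.le).trans (hM 1 (by omega))
  have hlast : |a (n - 1) * (1 - ((n - 1 : ℕ) : ℝ) / n)| ≤ M :=
    (abs_mul_one_sub_div_le _ (Nat.sub_le n 1)).trans (hM _ le_rfl)
  have hvar : ∑ k ∈ Finset.Icc 2 (n - 1),
      |a k * (1 - (k : ℝ) / n) - a (k - 1) * (1 - ((k - 1 : ℕ) : ℝ) / n)| ≤ V + M :=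
    calc _ ≤ ∑ k ∈ Finset.Icc 2 (n - 1), (|a k - a (k - 1)| + M / n) := by
          refine Finset.sum_le_sum fun k hk => ?_
          obtain ⟨hk2, hkn⟩ := Finset.mem_Icc.mp hk
          refine (abs_taper_sub_le a (by omega) (by omega)).trans (add_le_add_right ?_ _)
          exact div_le_div_of_nonneg_right (hM _ (by omega)) n.cast_nonneg
      _ ≤ V + n * (M / n) := by
          rw [Finset.sum_add_distrib, Finset.sum_const, nsmul_eq_mul]
          gcongr
          exact_mod_cast (Nat.card_Icc 2 (n - 1)).trans_le (by omega)
      _ = V + M := by field_simp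
  simp only [Nat.cast_one] at hfirst
  linarith

theorem two_mul_sin_half_le_norm_one_sub_exp {δ ω : ℝ} (hδ : 0 ≤ δ) (hδω : δ ≤ |ω|)
    (hωπ : |ω| ≤ π) : 2 * Real.sin (δ / 2) ≤ ‖1 - cexp (-(I * ω))‖ := by
  have hhalf : |ω / 2| ≤ π := by rw [abs_div, abs_two]; linarith [pi_pos]
  rw [norm_sub_rev, show -(I * ω) = I * (-ω : ℝ) by push_cast; ring,
    Complex.norm_exp_I_mul_ofReal_sub_one, Real.norm_eq_abs, abs_mul, abs_two, neg_div,
    Real.sin_neg, abs_neg, abs_sin_eq_sin_abs_of_abs_le_pi hhalf, abs_div, abs_two]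
  gcongr
  refine Real.sin_le_sin_of_le_of_le_pi_div_two (by linarith [pi_pos]) (by linarith) ?_
  linarith

theorem kernelK_le_of_le_abs {n : ℕ} {a : ℕ → ℝ} {M V δ ω : ℝ}
    (hM : ∀ k ≤ n - 1, |a k| ≤ M) (hV : ∑ k ∈ Finset.Icc 2 (n - 1), |a k - a (k - 1)| ≤ V)
    (hδ : 0 < δ) (hδω : δ ≤ |ω|) (hωπ : |ω| ≤ π) :
    kernelK n a ω ≤ ((V + 3 * M) / (2 * Real.sin (δ / 2))) ^ 2 / (2 * π) / normalizerA n a := by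
  have hsin : 0 < 2 * Real.sin (δ / 2) := by
    have := Real.sin_pos_of_pos_of_lt_pi (half_pos hδ) (by linarith)
    positivity
  have hwindow : ‖smoothWindow n a ω‖ ≤ (V + 3 * M) / (2 * Real.sin (δ / 2)) := by
    rw [le_div_iff₀ hsin]
    calc _ ≤ ‖smoothWindow n a ω‖ * ‖1 - cexp (-(I * ω))‖ :=
          mul_le_mul_of_nonneg_left (two_mul_sin_half_le_norm_one_sub_exp hδ.le hδω hωπ)
            (norm_nonneg _)
      _ ≤ V + 3 * M := norm_smoothWindow_mul_le hM hV ω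
  rw [kernelK_eq, div_div]
  have := normalizerA_nonneg n a
  gcongr

theorem tendstoUniformlyOn_kernelK {a : ℕ → ℕ → ℝ} {M V : ℝ}
    (hM : ∀ n, ∀ k ≤ n - 1, |a n k| ≤ M)
    (hV : ∀ n, ∑ k ∈ Finset.Icc 2 (n - 1), |a n k - a n (k - 1)| ≤ V)
    (hA : Tendsto (fun n => normalizerA n (a n)) atTop atTop) {u : Set ℝ} (hu : u ∈ 𝓝 0) :
    TendstoUniformlyOn (fun n => kernelK n (a n)) 0 atTop (Set.Ioc (-π) π \ u) := by
  obtain ⟨ε, hε, hball⟩ := Metric.mem_nhds_iff.mp hu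
  set δ := min ε π
  have hδ : 0 < δ := lt_min hε pi_pos
  set C := ((V + 3 * M) / (2 * Real.sin (δ / 2))) ^ 2 / (2 * π)
  have hbound : ∀ n, ∀ ω ∈ Set.Ioc (-π) π \ u, kernelK n (a n) ω ≤ C / normalizerA n (a n) := by
    intro n ω ⟨⟨hlo, hhi⟩, hωu⟩
    have hδω : δ ≤ |ω| := (min_le_left _ _).trans (not_lt.mp fun h =>
      hωu (hball (by rwa [Metric.mem_ball, Real.dist_eq, sub_zero])))
    exact kernelK_le_of_le_abs (hM n) (hV n) hδ hδω (abs_le.mpr ⟨hlo.le, hhi⟩)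
  rw [Metric.tendstoUniformlyOn_iff]
  intro η hη
  filter_upwards [(hA.const_div_atTop C).eventually (gt_mem_nhds hη)] with n hn ω hω
  rw [Pi.zero_apply, Real.dist_eq, zero_sub, abs_neg, abs_of_nonneg (kernelK_nonneg _ _ _)]
  exact (hbound n ω hω).trans_lt hn

theorem kernel_smoothed_spectral_limit_general (r : ℤ → ℝ)
    (hA1 : Summable fun k : ℤ => (1 + |(k : ℝ)|) * |r k|)
    (a : ℕ → ℕ → ℝ)
    (hbdd : ∃ M : ℝ, ∀ n : ℕ, ∀ k : ℕ, k ≤ n - 1 → |a n k| ≤ M)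
    (hvar : ∃ V : ℝ, ∀ n : ℕ, (∑ k ∈ Finset.Icc 2 (n - 1), |a n k - a n (k - 1)|) ≤ V)
    (hAn : Tendsto (fun n : ℕ => normalizerA n (a n)) atTop atTop) :
    Tendsto (fun n : ℕ =>
        ∫ ω in (-Real.pi)..Real.pi, kernelK n (a n) ω * (specDensity r ω) ^ 2)
      atTop (nhds ((specDensity r 0) ^ 2)) := by
  obtain ⟨M, hM⟩ := hbdd
  obtain ⟨V, hV⟩ := hvar
  have hr : Summable fun k : ℤ => |r k| := hA1.of_nonneg_of_le (fun k => abs_nonneg _)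
    fun k => le_mul_of_one_le_left (abs_nonneg _) (le_add_of_nonneg_right (abs_nonneg _))
  have hf : Continuous fun ω => specDensity r ω ^ 2 := (continuous_specDensity hr).pow 2
  have hmass : Tendsto (fun n => ∫ ω in Set.Ioc (-π) π, kernelK n (a n) ω) atTop (𝓝 1) := by
    refine tendsto_const_nhds.congr' ?_
    filter_upwards [hAn.eventually_gt_atTop 0] with n hn
    rw [← intervalIntegral.integral_of_le (by linarith [pi_pos]), integral_kernelK hn.ne']
  have := tendsto_setIntegral_peak_smul_of_integrableOn_of_tendsto measurableSet_Ioc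
    measurableSet_Ioc subset_rfl self_mem_nhdsWithin measure_Ioc_lt_top.ne
    (Eventually.of_forall fun n ω _ => kernelK_nonneg n (a n) ω)
    (fun u hu h0 => tendstoUniformlyOn_kernelK hM hV hAn (hu.mem_nhds h0)) hmass
    (Eventually.of_forall fun n => (continuous_kernelK n (a n)).aestronglyMeasurable)
    hf.integrableOn_Ioc ((hf.tendsto 0).mono_left nhdsWithin_le_nhds)
  simpa only [smul_eq_mul, intervalIntegral.integral_of_le (by linarith [pi_pos] : -π ≤ π)]

/-- for even `r` satisfying A.1, and a triangular weight array `a_{k,n}` that is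
uniformly bounded and of uniformly bounded variation, with `A_n → ∞`, one has
`∫_{-π}^{π} K_n(ω) f(ω)² dω → f(0)²`. -/
theorem kernel_smoothed_spectral_limit (r : ℤ → ℝ) (heven : ∀ k : ℤ, r (-k) = r k)
    (hA1 : Summable fun k : ℤ => (1 + |(k : ℝ)|) * |r k|)
    (a : ℕ → ℕ → ℝ)
    (hbdd : ∃ M : ℝ, ∀ n : ℕ, ∀ k : ℕ, k ≤ n - 1 → |a n k| ≤ M)
    (hvar : ∃ V : ℝ, ∀ n : ℕ, (∑ k ∈ Finset.Icc 2 (n - 1), |a n k - a n (k - 1)|) ≤ V)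
    (hAn : Tendsto (fun n : ℕ => normalizerA n (a n)) atTop atTop) :
    Tendsto (fun n : ℕ =>
        ∫ ω in (-Real.pi)..Real.pi, kernelK n (a n) ω * (specDensity r ω) ^ 2)
      atTop (nhds ((specDensity r 0) ^ 2)) :=
  kernel_smoothed_spectral_limit_general r hA1 a hbdd hvar hAn
end

section
/- For every M > 0 and V > 0 there exists a constant C > 0 such that: for all n ≥ 2, all real weights a_1,…,a_{n−1} with max_{1≤k≤n−1}|a_k| ≤ M and ∑_{k=2}^{n−1}|a_k − a_{k−1}| ≤ V, and all ω with |ω| ≤ π, one has |∑_{k=1}^{n−1} a_k (1 − k/n) e^{-ιkω}| ≤ C·L_{0,n}(ω). -/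
/-!
With `z = e^{-ιω}` the window is `z ∑_{i<n-1} c_i z^i`, where `c_i = a_{i+1} (1 - (i+1)/n)`.
For `|ω| ≤ 1/n` the trivial bound `(n-1) max |c_i| ≤ nM` suffices. Otherwise Abel summation
bounds the sum by `|c_{n-2}| + ∑ |c_{i+1} - c_i|` times the largest partial geometric sum, and
`|∑_{j<t} z^j| ≤ 2 / |z - 1| = 1 / |sin (ω/2)| ≤ π / |ω|` by Jordan's inequality. The Bartlett taper
`1 - k/n` lies in `[0, 1]` and moves in steps of `1/n`, so the tapered weights have variation at
most `V + M`, whence `C = π (2M + V)`.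
-/

open Complex Real

/-- The function `L_{0,n}` of Dahlhaus (1983), defined for `|ω| ≤ π`
(its 2π-periodic extension is irrelevant on this range). -/
noncomputable def L0 (n : ℕ) (ω : ℝ) : ℝ :=
  if |ω| ≤ 1 / (n : ℝ) then (n : ℝ) else 1 / |ω|

open Finset

theorem sum_Icc_eq_sum_range {M : Type*} [AddCommMonoid M] (f : ℕ → M) (a b : ℕ) :
    ∑ k ∈ Icc a b, f k = ∑ i ∈ range (b + 1 - a), f (i + a) := by
  rw [← Ico_add_one_right_eq_Icc, sum_Ico_eq_sum_range]
  simp only [add_comm a]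

theorem norm_sum_range_smul_le_of_norm_partial_sum_le {𝕜 E : Type*} [NormedField 𝕜]
    [NormedAddCommGroup E] [NormedSpace 𝕜 E] (f : ℕ → 𝕜) (g : ℕ → E) {m : ℕ} {G : ℝ}
    (hG : ∀ t ≤ m, ‖∑ j ∈ range t, g j‖ ≤ G) :
    ‖∑ i ∈ range m, f i • g i‖ ≤
      (‖f (m - 1)‖ + ∑ i ∈ range (m - 1), ‖f (i + 1) - f i‖) * G := by
  rw [sum_range_by_parts, add_mul, sum_mul]
  refine (norm_sub_le _ _).trans (add_le_add ?_ ((norm_sum_le _ _).trans (sum_le_sum ?_)))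
  · exact (norm_smul_le _ _).trans (mul_le_mul_of_nonneg_left (hG m le_rfl) (norm_nonneg _))
  · intro i hi
    have hi : i + 1 ≤ m := by rw [mem_range] at hi; omega
    exact (norm_smul_le _ _).trans (mul_le_mul_of_nonneg_left (hG _ hi) (norm_nonneg _))

theorem norm_sum_range_smul_pow_le {𝕜 A : Type*} [NormedField 𝕜] [NormedDivisionRing A]
    [NormedAlgebra 𝕜 A] {c : ℕ → 𝕜} {z : A} {m : ℕ} {M : ℝ} (hz : ‖z‖ ≤ 1)
    (hc : ∀ i < m, ‖c i‖ ≤ M) : ‖∑ i ∈ range m, c i • z ^ i‖ ≤ m * M := by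
  calc ‖∑ i ∈ range m, c i • z ^ i‖ ≤ ∑ i ∈ range m, M :=
        norm_sum_le_of_le _ fun i hi => by
          rw [norm_smul, norm_pow]
          exact (mul_le_of_le_one_right (norm_nonneg _) (pow_le_one₀ (norm_nonneg z) hz)).trans
            (hc i (mem_range.mp hi))
    _ = m * M := by rw [sum_const, card_range, nsmul_eq_mul]

theorem norm_geom_sum_le {𝕜 : Type*} [NormedField 𝕜] {z : 𝕜} (hz : ‖z‖ ≤ 1) (hz1 : z ≠ 1)
    (t : ℕ) : ‖∑ j ∈ range t, z ^ j‖ ≤ 2 / ‖z - 1‖ := by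
  rw [geom_sum_eq hz1, norm_div]
  gcongr
  calc ‖z ^ t - 1‖ ≤ ‖z ^ t‖ + ‖(1 : 𝕜)‖ := norm_sub_le _ _
    _ ≤ 1 + 1 := by
      rw [norm_pow, norm_one]
      gcongr
      exact pow_le_one₀ (norm_nonneg z) hz
    _ = 2 := by norm_num

theorem mul_abs_le_norm_exp_I_mul_ofReal_sub_one {x : ℝ} (hx : |x| ≤ π) :
    2 / π * |x| ≤ ‖exp (I * x) - 1‖ := by
  have hx2 : |x / 2| ≤ π / 2 := by rw [abs_div, abs_two]; linarith
  have hjordan := mul_abs_le_abs_sin hx2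
  rw [abs_div, abs_two] at hjordan
  rw [norm_exp_I_mul_ofReal_sub_one, norm_mul, Real.norm_eq_abs, Real.norm_eq_abs, abs_two]
  linarith

theorem norm_geom_sum_exp_I_mul_ofReal_le {x : ℝ} (hx0 : x ≠ 0) (hx : |x| ≤ π) (t : ℕ) :
    ‖∑ j ∈ range t, exp (I * x) ^ j‖ ≤ π / |x| := by
  have hpos : 0 < 2 / π * |x| := by positivity
  have hlow := mul_abs_le_norm_exp_I_mul_ofReal_sub_one hx
  have hne : exp (I * x) ≠ 1 := by
    intro h
    rw [h, sub_self, norm_zero] at hlow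
    linarith
  calc ‖∑ j ∈ range t, exp (I * x) ^ j‖ ≤ 2 / ‖exp (I * x) - 1‖ :=
        norm_geom_sum_le (norm_exp_I_mul_ofReal x).le hne t
    _ ≤ 2 / (2 / π * |x|) := by gcongr
    _ = π / |x| := by field_simp

theorem sum_Icc_one_mul_exp_eq (b : ℕ → ℝ) (m : ℕ) (ω : ℝ) :
    ∑ k ∈ Icc 1 m, (b k : ℂ) * exp (-(I * k * ω)) =
      exp (I * ↑(-ω)) * ∑ i ∈ range m, b (i + 1) • exp (I * ↑(-ω)) ^ i := by
  rw [sum_Icc_eq_sum_range, Nat.add_sub_cancel, mul_sum]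
  refine sum_congr rfl fun i _ => ?_
  rw [Complex.real_smul, mul_left_comm, ← pow_succ', ← Complex.exp_nat_mul]
  push_cast
  ring_nf

theorem abs_mul_sub_mul_le (a a' w w' : ℝ) (hw' : |w'| ≤ 1) :
    |a' * w' - a * w| ≤ |a' - a| + |a| * |w' - w| := by
  calc |a' * w' - a * w| = |(a' - a) * w' + a * (w' - w)| := by ring_nf
    _ ≤ |(a' - a) * w'| + |a * (w' - w)| := abs_add_le _ _
    _ ≤ |a' - a| + |a| * |w' - w| := by
      rw [abs_mul, abs_mul]
      gcongr
      exact mul_le_of_le_one_right (abs_nonneg _) hw'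

theorem sum_range_abs_mul_sub_mul_le {a w : ℕ → ℝ} {m : ℕ} {M : ℝ} (ha : ∀ i < m, |a i| ≤ M)
    (hw : ∀ i < m, |w (i + 1)| ≤ 1) :
    ∑ i ∈ range m, |a (i + 1) * w (i + 1) - a i * w i| ≤
      ∑ i ∈ range m, |a (i + 1) - a i| + M * ∑ i ∈ range m, |w (i + 1) - w i| := by
  rw [mul_sum, ← sum_add_distrib]
  refine sum_le_sum fun i hi => ?_
  rw [mem_range] at hi
  refine (abs_mul_sub_mul_le _ _ _ _ (hw i hi)).trans ?_
  gcongr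
  exact ha i hi

noncomputable def bartlett (n k : ℕ) : ℝ := 1 - k / n

theorem abs_bartlett_le_one {n k : ℕ} (hk : k ≤ n) : |bartlett n k| ≤ 1 := by
  have h0 : 0 ≤ (k : ℝ) / n := by positivity
  have h1 : (k : ℝ) / n ≤ 1 := div_le_one_of_le₀ (Nat.cast_le.mpr hk) (Nat.cast_nonneg n)
  rw [bartlett, abs_le]
  constructor <;> linarith

theorem abs_bartlett_succ_sub (n k : ℕ) : |bartlett n (k + 1) - bartlett n k| = 1 / n := by
  have hdiff : bartlett n (k + 1) - bartlett n k = -(1 / n) := by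
    simp only [bartlett]
    push_cast
    ring
  rw [hdiff, abs_neg, abs_of_nonneg (by positivity)]

theorem sum_range_abs_bartlett_succ_sub_le {n m : ℕ} (hm : m ≤ n) (f : ℕ → ℕ) :
    ∑ i ∈ range m, |bartlett n (f i + 1) - bartlett n (f i)| ≤ 1 := by
  simp only [abs_bartlett_succ_sub, sum_const, card_range, nsmul_eq_mul, mul_one_div]
  exact div_le_one_of_le₀ (Nat.cast_le.mpr hm) (Nat.cast_nonneg n)

theorem abs_mul_bartlett_le {a M : ℝ} {n k : ℕ} (ha : |a| ≤ M) (hk : k ≤ n) :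
    |a * bartlett n k| ≤ M := by
  rw [abs_mul]
  exact (mul_le_of_le_one_right (abs_nonneg a) (abs_bartlett_le_one hk)).trans ha

theorem bartlett_tapered_variation_le {n : ℕ} {a : ℕ → ℝ} {M V : ℝ} (hn : 2 ≤ n)
    (ha : ∀ k, 1 ≤ k → k ≤ n - 1 → |a k| ≤ M)
    (hvar : ∑ k ∈ Icc 2 (n - 1), |a k - a (k - 1)| ≤ V) :
    |a (n - 1 - 1 + 1) * bartlett n (n - 1 - 1 + 1)| +
        ∑ i ∈ range (n - 1 - 1),
          |a (i + 1 + 1) * bartlett n (i + 1 + 1) - a (i + 1) * bartlett n (i + 1)| ≤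
      2 * M + V := by
  have hM : 0 ≤ M := (abs_nonneg _).trans (ha 1 le_rfl (by omega))
  have hlast : |a (n - 1 - 1 + 1) * bartlett n (n - 1 - 1 + 1)| ≤ M :=
    abs_mul_bartlett_le (ha _ (by omega) (by omega)) (by omega)
  have hvar' : ∑ i ∈ range (n - 1 - 1), |a (i + 1 + 1) - a (i + 1)| ≤ V := by
    rw [sum_Icc_eq_sum_range, show n - 1 + 1 - 2 = n - 1 - 1 by omega] at hvar
    simpa using hvar
  have hprod := sum_range_abs_mul_sub_mul_le (a := fun i => a (i + 1))
    (w := fun i => bartlett n (i + 1)) (m := n - 1 - 1) (fun i _ => ha _ (by omega) (by omega))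
    (fun i _ => abs_bartlett_le_one (by omega))
  have htaper := sum_range_abs_bartlett_succ_sub_le (n := n) (m := n - 1 - 1) (by omega)
    (fun i => i + 1)
  linarith [mul_le_of_le_one_right hM htaper]

/-- for every `M > 0` and `V > 0` there is `C > 0` such that, for all `n ≥ 2`,
all weights with `|a_k| ≤ M` and total variation `∑_{k=2}^{n-1} |a_k - a_{k-1}| ≤ V`, and
all `|ω| ≤ π`, the smoothing window satisfies
`|∑_{k=1}^{n-1} a_k (1 - k/n) e^{-ικω}| ≤ C · L_{0,n}(ω)`. -/
theorem smoothing_window_L0_bound (M V : ℝ) (hM : 0 < M) (hV : 0 < V) :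
    ∃ C : ℝ, 0 < C ∧ ∀ n : ℕ, 2 ≤ n → ∀ a : ℕ → ℝ,
      (∀ k : ℕ, 1 ≤ k → k ≤ n - 1 → |a k| ≤ M) →
      (∑ k ∈ Finset.Icc 2 (n - 1), |a k - a (k - 1)|) ≤ V →
      ∀ ω : ℝ, |ω| ≤ Real.pi →
        ‖∑ k ∈ Finset.Icc 1 (n - 1),
            ((a k * (1 - (k : ℝ) / (n : ℝ)) : ℝ) : ℂ) *
              Complex.exp (-(Complex.I * (k : ℂ) * (ω : ℂ)))‖ ≤ C * L0 n ω := by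
  refine ⟨π * (2 * M + V), by positivity, ?_⟩
  intro n hn a ha hvar ω hω
  have hweight : ∀ i < n - 1, ‖a (i + 1) * bartlett n (i + 1)‖ ≤ M := fun i _ =>
    abs_mul_bartlett_le (ha _ (by omega) (by omega)) (by omega)
  change ‖∑ k ∈ Icc 1 (n - 1), ((a k * bartlett n k : ℝ) : ℂ) * exp (-(I * k * ω))‖ ≤ _
  rw [sum_Icc_one_mul_exp_eq (fun k => a k * bartlett n k), norm_mul, norm_exp_I_mul_ofReal,
    one_mul, L0]
  split_ifs with hsmall
  · calc _ ≤ ((n - 1 : ℕ) : ℝ) * M :=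
          norm_sum_range_smul_pow_le (norm_exp_I_mul_ofReal _).le hweight
      _ ≤ n * (π * (2 * M + V)) := mul_le_mul (Nat.cast_le.mpr (Nat.sub_le n 1))
          (by nlinarith [pi_gt_three]) hM.le (Nat.cast_nonneg n)
      _ = π * (2 * M + V) * n := mul_comm _ _
  · have hω0 : ω ≠ 0 := by
      rintro rfl
      exact hsmall (by rw [abs_zero]; positivity)
    have hG : ∀ t ≤ n - 1, ‖∑ j ∈ range t, exp (I * ↑(-ω)) ^ j‖ ≤ π / |ω| := fun t _ => by
      simpa only [abs_neg] using
        norm_geom_sum_exp_I_mul_ofReal_le (neg_ne_zero.mpr hω0) (by rwa [abs_neg]) t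
    calc _ ≤ _ := norm_sum_range_smul_le_of_norm_partial_sum_le _ _ hG
      _ ≤ (2 * M + V) * (π / |ω|) :=
          mul_le_mul_of_nonneg_right (bartlett_tapered_variation_le hn ha hvar) (by positivity)
      _ = π * (2 * M + V) * (1 / |ω|) := by ring
end

section
/- Let r : ℤ → ℝ satisfy ∑_{k∈ℤ}(1+|k|)|r(k)| < ∞ and let M > 0. Then there exists a constant C > 0 such that for all n ≥ 2 and all real weights a_1,…,a_{n−1} with max_{1≤k≤n−1}|a_k| ≤ M, one has |∑_{j=1}^{n−1}∑_{k=1}^{n−1} a_j a_k (1 − k/n) ∑_{t∈ℤ} r(t)·r(t+j+k)| ≤ C. (This is the bound |S̃_{2n}| ≤ C/n after multiplying by n, obtained by grouping pairs (j,k) according to d = j + k.) -/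
/-!
Grouping the pairs `(j, k)` by `d = j + k`, at most `d + 1` pairs share a lag `d`, so the double
sum is at most `M² ∑_d (1 + |d|) |∑_t r(t) r(t + d)|`. Since `1 + |d| ≤ (1 + |t|)(1 + |t + d|)`,
with `w(t) = (1 + |t|)|r(t)|` this is at most `M² ∑_d ∑_t w(t) w(t + d) ≤ M² (∑_t w(t))²`.
-/

open Finset

lemma one_add_abs_sub_le_mul (x y : ℝ) : 1 + |y - x| ≤ (1 + |x|) * (1 + |y|) := by
  nlinarith [abs_sub y x, abs_nonneg x, abs_nonneg y, mul_nonneg (abs_nonneg x) (abs_nonneg y)]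

lemma sum_comp_add_le_sum_succ_mul {g : ℕ → ℝ} (hg : ∀ d, 0 ≤ g d) (s : Finset (ℕ × ℕ)) :
    ∑ p ∈ s, g (p.1 + p.2) ≤ ∑ d ∈ s.image (fun p : ℕ × ℕ => p.1 + p.2), ((d : ℝ) + 1) * g d := by
  rw [sum_comp g (fun p : ℕ × ℕ => p.1 + p.2)]
  refine sum_le_sum fun d _ => ?_
  rw [nsmul_eq_mul]
  refine mul_le_mul_of_nonneg_right ?_ (hg d)
  have hfiber : {p ∈ s | p.1 + p.2 = d} ⊆ antidiagonal d := fun p hp =>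
    mem_antidiagonal.mpr (mem_filter.mp hp).2
  exact_mod_cast (card_le_card hfiber).trans (Nat.card_antidiagonal d).le

section LaggedProducts

variable {u : ℤ → ℝ}

lemma summable_mul_shift (hu : Summable u) (hu0 : ∀ t, 0 ≤ u t) (d : ℤ) :
    Summable fun t => u t * u (t + d) :=
  (hu.mul_right (∑' t, u t)).of_nonneg_of_le (fun t => mul_nonneg (hu0 t) (hu0 _)) fun t =>
    mul_le_mul_of_nonneg_left (hu.le_tsum _ fun s _ => hu0 s) (hu0 t)

lemma sum_tsum_mul_shift_le (hu : Summable u) (hu0 : ∀ t, 0 ≤ u t) (F : Finset ℤ) :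
    ∑ d ∈ F, ∑' t, u t * u (t + d) ≤ (∑' t, u t) ^ 2 := by
  have hshift := summable_mul_shift hu hu0
  rw [← Summable.tsum_finsetSum fun d _ => hshift d, sq, ← tsum_mul_right]
  refine Summable.tsum_le_tsum (fun t => ?_) (summable_sum fun d _ => hshift d) (hu.mul_right _)
  rw [← mul_sum]
  refine mul_le_mul_of_nonneg_left ?_ (hu0 t)
  simpa only [sum_map, addLeftEmbedding_apply] using
    hu.sum_le_tsum (F.map (addLeftEmbedding t)) fun s _ => hu0 s

end LaggedProducts

def weightedAbs (r : ℤ → ℝ) (t : ℤ) : ℝ := (1 + |(t : ℝ)|) * |r t|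

section WeightedAbs

variable {r : ℤ → ℝ}

lemma weightedAbs_nonneg (t : ℤ) : 0 ≤ weightedAbs r t := by
  unfold weightedAbs; positivity

lemma abs_le_weightedAbs (t : ℤ) : |r t| ≤ weightedAbs r t :=
  le_mul_of_one_le_left (abs_nonneg _) (le_add_of_nonneg_right (abs_nonneg _))

lemma one_add_abs_mul_abs_tsum_mul_shift_le (hr : Summable (weightedAbs r)) (d : ℤ) :
    (1 + |(d : ℝ)|) * |∑' t : ℤ, r t * r (t + d)|
      ≤ ∑' t, weightedAbs r t * weightedAbs r (t + d) := by
  have habs : Summable fun t => |r t| :=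
    hr.of_nonneg_of_le (fun t => abs_nonneg _) abs_le_weightedAbs
  have habs_shift : Summable fun t => ‖r t * r (t + d)‖ := by
    simpa only [Real.norm_eq_abs, abs_mul] using
      summable_mul_shift habs (fun t => abs_nonneg _) d
  have hpoint : ∀ t : ℤ, (1 + |(d : ℝ)|) * ‖r t * r (t + d)‖
      ≤ weightedAbs r t * weightedAbs r (t + d) := fun t => by
    have hlag : 1 + |(d : ℝ)| ≤ (1 + |(t : ℝ)|) * (1 + |((t + d : ℤ) : ℝ)|) := by
      simpa only [Int.cast_add, add_sub_cancel_left] using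
        one_add_abs_sub_le_mul (t : ℝ) ((t + d : ℤ) : ℝ)
    calc (1 + |(d : ℝ)|) * ‖r t * r (t + d)‖
        ≤ ((1 + |(t : ℝ)|) * (1 + |((t + d : ℤ) : ℝ)|)) * (|r t| * |r (t + d)|) := by
          rw [Real.norm_eq_abs, abs_mul]
          exact mul_le_mul_of_nonneg_right hlag (by positivity)
      _ = weightedAbs r t * weightedAbs r (t + d) := by unfold weightedAbs; ring
  calc (1 + |(d : ℝ)|) * |∑' t : ℤ, r t * r (t + d)|
      ≤ (1 + |(d : ℝ)|) * ∑' t, ‖r t * r (t + d)‖ :=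
        mul_le_mul_of_nonneg_left (norm_tsum_le_tsum_norm habs_shift) (by positivity)
    _ ≤ ∑' t, weightedAbs r t * weightedAbs r (t + d) := by
      rw [← tsum_mul_left]
      exact (habs_shift.mul_left _).tsum_le_tsum hpoint
        (summable_mul_shift hr weightedAbs_nonneg d)

lemma sum_succ_mul_abs_tsum_mul_shift_le (hr : Summable (weightedAbs r)) (F : Finset ℕ) :
    ∑ d ∈ F, ((d : ℝ) + 1) * |∑' t : ℤ, r t * r (t + d)| ≤ (∑' t, weightedAbs r t) ^ 2 :=
  calc ∑ d ∈ F, ((d : ℝ) + 1) * |∑' t : ℤ, r t * r (t + d)|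
      = ∑ d ∈ F.map (Nat.castEmbedding : ℕ ↪ ℤ), (1 + |(d : ℝ)|) * |∑' t : ℤ, r t * r (t + d)| := by
        rw [sum_map]
        refine sum_congr rfl fun d _ => ?_
        simp only [Nat.castEmbedding_apply, Int.cast_natCast, Nat.abs_cast, add_comm]
    _ ≤ ∑ d ∈ F.map (Nat.castEmbedding : ℕ ↪ ℤ), ∑' t, weightedAbs r t * weightedAbs r (t + d) :=
        sum_le_sum fun d _ => one_add_abs_mul_abs_tsum_mul_shift_le hr d
    _ ≤ (∑' t, weightedAbs r t) ^ 2 := sum_tsum_mul_shift_le hr weightedAbs_nonneg _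

end WeightedAbs

lemma abs_one_sub_natCast_div_le_one {k n : ℕ} (h : k ≤ n) : |1 - (k : ℝ) / n| ≤ 1 := by
  have hle : (k : ℝ) / n ≤ 1 := div_le_one_of_le₀ (by exact_mod_cast h) n.cast_nonneg
  exact abs_le.mpr ⟨by linarith, by linarith [show 0 ≤ (k : ℝ) / n by positivity]⟩

lemma abs_tapered_product_le {x y M : ℝ} (hx : |x| ≤ M) (hy : |y| ≤ M) {k n : ℕ} (hkn : k ≤ n)
    (z : ℝ) : |x * y * (1 - (k : ℝ) / n) * z| ≤ M ^ 2 * |z| := by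
  have hxy : |x| * |y| ≤ M ^ 2 :=
    sq M ▸ mul_le_mul hx hy (abs_nonneg _) ((abs_nonneg _).trans hx)
  rw [abs_mul, abs_mul, abs_mul]
  calc |x| * |y| * |1 - (k : ℝ) / n| * |z| ≤ M ^ 2 * 1 * |z| := by
        gcongr; exact abs_one_sub_natCast_div_le_one hkn
    _ = M ^ 2 * |z| := by rw [mul_one]

theorem weighted_lagged_sum_bound_general (r : ℤ → ℝ)
    (hA1 : Summable fun k : ℤ => (1 + |(k : ℝ)|) * |r k|)
    (M : ℝ) :
    ∃ C : ℝ, 0 < C ∧ ∀ n : ℕ, 2 ≤ n → ∀ a : ℕ → ℝ,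
      (∀ k : ℕ, 1 ≤ k → k ≤ n - 1 → |a k| ≤ M) →
      |∑ j ∈ Finset.Icc 1 (n - 1), ∑ k ∈ Finset.Icc 1 (n - 1),
          a j * a k * (1 - (k : ℝ) / (n : ℝ)) *
            ∑' t : ℤ, r t * r (t + (j : ℤ) + (k : ℤ))| ≤ C := by
  set K := ∑' t, weightedAbs r t
  refine ⟨M ^ 2 * K ^ 2 + 1, by positivity, fun n _ a ha => ?_⟩
  simp only [add_assoc, ← Nat.cast_add]
  set ρ : ℕ → ℝ := fun d => |∑' t : ℤ, r t * r (t + d)|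
  have hterm : ∀ j ∈ Icc 1 (n - 1), ∀ k ∈ Icc 1 (n - 1),
      |a j * a k * (1 - (k : ℝ) / n) * ∑' t : ℤ, r t * r (t + (j + k : ℕ))| ≤ M ^ 2 * ρ (j + k) :=
    fun j hj k hk => by
      rw [mem_Icc] at hj hk
      exact abs_tapered_product_le (ha j hj.1 hj.2) (ha k hk.1 hk.2) (hk.2.trans (n.sub_le 1)) _
  calc _ ≤ ∑ j ∈ Icc 1 (n - 1), ∑ k ∈ Icc 1 (n - 1), M ^ 2 * ρ (j + k) :=
        (abs_sum_le_sum_abs _ _).trans (sum_le_sum fun j hj =>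
          (abs_sum_le_sum_abs _ _).trans (sum_le_sum (hterm j hj)))
    _ = M ^ 2 * ∑ p ∈ Icc 1 (n - 1) ×ˢ Icc 1 (n - 1), ρ (p.1 + p.2) := by
        rw [sum_product, mul_sum]
        simp_rw [mul_sum]
    _ ≤ M ^ 2 * K ^ 2 := by
        gcongr
        exact (sum_comp_add_le_sum_succ_mul (fun d => abs_nonneg _) _).trans
          (sum_succ_mul_abs_tsum_mul_shift_le hA1 _)
    _ ≤ M ^ 2 * K ^ 2 + 1 := le_add_of_nonneg_right zero_le_one

/-- under A.1, for bounded weights `a_1, …, a_{n-1}` (`|a_k| ≤ M`), the quantity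
`|∑_{j,k=1}^{n-1} a_j a_k (1 - k/n) ∑_{t∈ℤ} r(t) r(t+j+k)|` is bounded by a constant `C`
uniformly in `n` and in the weights. -/
theorem weighted_lagged_sum_bound (r : ℤ → ℝ)
    (hA1 : Summable fun k : ℤ => (1 + |(k : ℝ)|) * |r k|)
    (M : ℝ) (hM : 0 < M) :
    ∃ C : ℝ, 0 < C ∧ ∀ n : ℕ, 2 ≤ n → ∀ a : ℕ → ℝ,
      (∀ k : ℕ, 1 ≤ k → k ≤ n - 1 → |a k| ≤ M) →
      |∑ j ∈ Finset.Icc 1 (n - 1), ∑ k ∈ Finset.Icc 1 (n - 1),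
          a j * a k * (1 - (k : ℝ) / (n : ℝ)) *
            ∑' t : ℤ, r t * r (t + (j : ℤ) + (k : ℤ))| ≤ C :=
  weighted_lagged_sum_bound_general r hA1 M
end

section
/- Let ℓ_n be a sequence of positive reals with ℓ_n ≥ 1, ℓ_n → ∞, and ℓ_n·(log n)/n → 0 as n → ∞. Set q_n = 1 − 1/ℓ_n and q_{k,n} = (1 − k/n)q_n^k + (k/n)q_n^{n−k} for 1 ≤ k ≤ n−1, and define A_n = ∑_{k=1}^{n−1} (2q_{k,n})²·(1 − k/n)². Then lim_{n→∞} A_n/ℓ_n = 2. -/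
open Filter

/-- The stationary bootstrap lag weight `q_{k,n} = (1 - k/n) q^k + (k/n) q^{n-k}`. -/
noncomputable def sbWeight (n : ℕ) (q : ℝ) (k : ℕ) : ℝ :=
  (1 - (k : ℝ) / (n : ℝ)) * q ^ k + ((k : ℝ) / (n : ℝ)) * q ^ (n - k)

/-!
Write `x = q²` with `q = 1 - 1/ℓ`, and `A_n = sbNormalizer n q`. Each summand of `A_n` lies between
`4 (1 - 4k/n) x^k` and `4 x^k + 8 q^n + 4 (1 - k/n) x^(n-k)`, so summing geometric and
arithmetico-geometric series pins `A_n` to `4x/(1-x)` up to `O(ℓ²/n)`: here `1/(1-x) ≤ ℓ`, and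
`q^n ≤ exp(-n/ℓ)` gives `n^m q^n ≤ m! ℓ^m`. Finally `4x/((1-x)ℓ) = 4q²/(2 - 1/ℓ) → 2`, while
`ℓ/n → 0` because `ℓ log n / n → 0`.
-/

open Finset Real Topology
open scoped Nat

lemma four_mul_one_sub_four_mul_mul_sq_le {b P Q : ℝ} (hb0 : 0 ≤ b) (hb1 : b ≤ 1) (hP : 0 ≤ P)
    (hQ : 0 ≤ Q) :
    4 * (1 - 4 * b) * P ^ 2 ≤ (2 * ((1 - b) * P + b * Q)) ^ 2 * (1 - b) ^ 2 := by
  have hbernoulli : 1 - 4 * b ≤ (1 - b) ^ 4 := by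
    simpa [sub_eq_add_neg] using one_add_mul_le_pow (a := -b) (by linarith) 4
  calc 4 * (1 - 4 * b) * P ^ 2 ≤ 4 * (1 - b) ^ 4 * P ^ 2 := by gcongr
    _ = (2 * ((1 - b) * P)) ^ 2 * (1 - b) ^ 2 := by ring
    _ ≤ (2 * ((1 - b) * P + b * Q)) ^ 2 * (1 - b) ^ 2 := by
      have : 0 ≤ 1 - b := by linarith
      gcongr
      exact le_add_of_nonneg_right (by positivity)

lemma sq_two_mul_add_mul_sq_le {a b P Q : ℝ} (ha0 : 0 ≤ a) (ha1 : a ≤ 1) (hb0 : 0 ≤ b)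
    (hb1 : b ≤ 1) (hP : 0 ≤ P) (hQ : 0 ≤ Q) :
    (2 * (a * P + b * Q)) ^ 2 * a ^ 2 ≤ 4 * P ^ 2 + 8 * (P * Q) + 4 * a * Q ^ 2 := by
  have h : (a * P + b * Q) * a ≤ P + a * Q := by nlinarith [mul_nonneg ha0 hP, mul_nonneg ha0 hQ]
  calc (2 * (a * P + b * Q)) ^ 2 * a ^ 2 = 4 * ((a * P + b * Q) * a) ^ 2 := by ring
    _ ≤ 4 * (P + a * Q) ^ 2 := by gcongr
    _ ≤ 4 * P ^ 2 + 8 * (P * Q) + 4 * a * Q ^ 2 := by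
      nlinarith [mul_le_mul_of_nonneg_right ha1 (mul_nonneg hP hQ),
        mul_le_mul_of_nonneg_right ha1 (mul_nonneg ha0 (sq_nonneg Q))]

lemma sum_natCast_mul_pow_le (s : Finset ℕ) {x : ℝ} (hx0 : 0 ≤ x) (hx1 : x < 1) :
    ∑ k ∈ s, (k : ℝ) * x ^ k ≤ x / (1 - x) ^ 2 := by
  have h := hasSum_coe_mul_geometric_of_norm_lt_one (𝕜 := ℝ) (by rwa [norm_of_nonneg hx0])
  exact h.tsum_eq ▸ h.summable.sum_le_tsum s fun k _ => by positivity

lemma natCast_pow_mul_one_sub_inv_pow_le {L : ℝ} (hL : 1 ≤ L) (m n : ℕ) :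
    (n : ℝ) ^ m * (1 - 1 / L) ^ n ≤ m ! * L ^ m := by
  have hL0 : 0 < L := by linarith
  have hq0 : 0 ≤ 1 - 1 / L := by rw [sub_nonneg, div_le_one hL0]; exact hL
  have hq : (1 - 1 / L) ^ n ≤ exp (-(n / L)) := by
    calc (1 - 1 / L) ^ n ≤ exp (-(1 / L)) ^ n := by gcongr; exact one_sub_le_exp_neg _
      _ = exp (-(n / L)) := by rw [← exp_nat_mul]; ring_nf
  have hfact := pow_div_factorial_le_exp (x := n / L) (by positivity) m
  calc (n : ℝ) ^ m * (1 - 1 / L) ^ n ≤ n ^ m * exp (-(n / L)) := by gcongr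
    _ = (n / L) ^ m / m ! * exp (-(n / L)) * (m ! * L ^ m) := by rw [div_pow]; field_simp
    _ ≤ exp (n / L) * exp (-(n / L)) * (m ! * L ^ m) := by gcongr
    _ = m ! * L ^ m := by rw [← exp_add, add_neg_cancel, exp_zero, one_mul]

lemma tendsto_div_natCast_of_tendsto_mul_log_div {f : ℕ → ℝ} (hf : ∀ n, 0 ≤ f n)
    (h : Tendsto (fun n : ℕ => f n * log n / n) atTop (𝓝 0)) :
    Tendsto (fun n : ℕ => f n / n) atTop (𝓝 0) := by
  have hlog : ∀ᶠ n : ℕ in atTop, 1 ≤ log n :=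
    (tendsto_log_atTop.comp tendsto_natCast_atTop_atTop).eventually_ge_atTop 1
  refine squeeze_zero' (.of_forall fun n => div_nonneg (hf n) n.cast_nonneg) ?_ h
  filter_upwards [hlog] with n hn
  gcongr
  exact le_mul_of_one_le_right (hf n) hn

section sbWeight

variable {n k : ℕ} {q : ℝ}

lemma sbWeight_term_ge (hk : k ≤ n) (hq : 0 ≤ q) :
    4 * (1 - 4 * ((k : ℝ) / n)) * (q ^ 2) ^ k ≤
      (2 * sbWeight n q k) ^ 2 * (1 - (k : ℝ) / n) ^ 2 := by
  rw [pow_right_comm]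
  exact four_mul_one_sub_four_mul_mul_sq_le (by positivity)
    (div_le_one_of_le₀ (by exact_mod_cast hk) n.cast_nonneg) (by positivity) (by positivity)

lemma sbWeight_term_le (hn : 0 < n) (hk : k ≤ n) (hq : 0 ≤ q) :
    (2 * sbWeight n q k) ^ 2 * (1 - (k : ℝ) / n) ^ 2 ≤
      4 * (q ^ 2) ^ k + 8 * q ^ n + 4 * (((n - k : ℕ) : ℝ) / n) * (q ^ 2) ^ (n - k) := by
  have hkn : (k : ℝ) / n ≤ 1 := div_le_one_of_le₀ (by exact_mod_cast hk) n.cast_nonneg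
  have hsub : ((n - k : ℕ) : ℝ) / n = 1 - (k : ℝ) / n := by
    rw [Nat.cast_sub hk]; field_simp
  have hk0 : 0 ≤ (k : ℝ) / n := by positivity
  rw [hsub, pow_right_comm, pow_right_comm q 2, ← pow_mul_pow_sub q hk]
  exact sq_two_mul_add_mul_sq_le (by linarith) (by linarith) hk0 hkn (by positivity)
    (by positivity)

end sbWeight

noncomputable def sbNormalizer (n : ℕ) (q : ℝ) : ℝ :=
  ∑ k ∈ Icc 1 (n - 1), (2 * sbWeight n q k) ^ 2 * (1 - (k : ℝ) / (n : ℝ)) ^ 2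

lemma sbNormalizer_eq_sum_Ico (n : ℕ) (q : ℝ) :
    sbNormalizer n q = ∑ k ∈ Ico 1 n, (2 * sbWeight n q k) ^ 2 * (1 - (k : ℝ) / n) ^ 2 := by
  have hIcc : Icc 1 (n - 1) = Ico 1 n := by
    ext k
    simp only [mem_Icc, mem_Ico]
    omega
  rw [sbNormalizer, hIcc]

section sbNormalizer

variable {n : ℕ} {q : ℝ}

lemma sbNormalizer_ge (hn : 0 < n) (hq0 : 0 ≤ q) (hq1 : q < 1) :
    4 * ((q ^ 2 - (q ^ 2) ^ n) / (1 - q ^ 2)) - 16 / n * (q ^ 2 / (1 - q ^ 2) ^ 2) ≤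
      sbNormalizer n q := by
  have hx1 : q ^ 2 < 1 := pow_lt_one₀ hq0 hq1 two_ne_zero
  rw [sbNormalizer_eq_sum_Ico]
  calc 4 * ((q ^ 2 - (q ^ 2) ^ n) / (1 - q ^ 2)) - 16 / n * (q ^ 2 / (1 - q ^ 2) ^ 2)
      ≤ 4 * ∑ k ∈ Ico 1 n, (q ^ 2) ^ k - 16 / n * ∑ k ∈ Ico 1 n, (k : ℝ) * (q ^ 2) ^ k := by
        rw [geom_sum_Ico' hx1.ne hn, pow_one]
        gcongr
        exact sum_natCast_mul_pow_le _ (by positivity) hx1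
    _ = ∑ k ∈ Ico 1 n, 4 * (1 - 4 * ((k : ℝ) / n)) * (q ^ 2) ^ k := by
        rw [mul_sum, mul_sum, ← sum_sub_distrib]
        congr! 1 with k
        ring
    _ ≤ _ := sum_le_sum fun k hk => sbWeight_term_ge (mem_Ico.1 hk).2.le hq0

lemma sbNormalizer_le (hn : 0 < n) (hq0 : 0 ≤ q) (hq1 : q < 1) :
    sbNormalizer n q ≤
      4 * (q ^ 2 / (1 - q ^ 2)) + 8 * n * q ^ n + 4 / n * (q ^ 2 / (1 - q ^ 2) ^ 2) := by
  have hx0 : 0 ≤ q ^ 2 := by positivity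
  have hx1 : q ^ 2 < 1 := pow_lt_one₀ hq0 hq1 two_ne_zero
  have hgeom : ∑ k ∈ Ico 1 n, (q ^ 2) ^ k ≤ q ^ 2 / (1 - q ^ 2) := by
    simpa using geom_sum_Ico_le_of_lt_one (m := 1) (n := n) hx0 hx1
  have hcard : ∑ _k ∈ Ico 1 n, 8 * q ^ n ≤ 8 * n * q ^ n := by
    rw [sum_const, Nat.card_Ico, nsmul_eq_mul, mul_left_comm, mul_assoc]
    gcongr
    exact_mod_cast n.sub_le 1
  have hreflect : ∑ k ∈ Ico 1 n, ((n - k : ℕ) : ℝ) * (q ^ 2) ^ (n - k) ≤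
      q ^ 2 / (1 - q ^ 2) ^ 2 := by
    rw [sum_Ico_reflect (fun j => (j : ℝ) * (q ^ 2) ^ j) 1 n.le_succ]
    exact sum_natCast_mul_pow_le _ hx0 hx1
  rw [sbNormalizer_eq_sum_Ico]
  calc _ ≤ ∑ k ∈ Ico 1 n,
        (4 * (q ^ 2) ^ k + 8 * q ^ n + 4 * (((n - k : ℕ) : ℝ) / n) * (q ^ 2) ^ (n - k)) :=
        sum_le_sum fun k hk => sbWeight_term_le hn (mem_Ico.1 hk).2.le hq0
    _ = 4 * ∑ k ∈ Ico 1 n, (q ^ 2) ^ k + ∑ _k ∈ Ico 1 n, 8 * q ^ n +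
        4 / n * ∑ k ∈ Ico 1 n, ((n - k : ℕ) : ℝ) * (q ^ 2) ^ (n - k) := by
        rw [sum_add_distrib, sum_add_distrib, mul_sum, mul_sum]
        congr! 2 with k
        ring
    _ ≤ _ := by gcongr

end sbNormalizer

lemma one_sub_one_sub_inv_sq {L : ℝ} (hL : L ≠ 0) : 1 - (1 - 1 / L) ^ 2 = (2 - 1 / L) / L := by
  field_simp
  ring

lemma one_div_one_sub_one_sub_inv_sq_le {L : ℝ} (hL : 1 ≤ L) : 1 / (1 - (1 - 1 / L) ^ 2) ≤ L := by
  have hL0 : 0 < L := by linarith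
  rw [one_sub_one_sub_inv_sq hL0.ne', one_div_div]
  exact div_le_self hL0.le (by linarith [div_le_one_of_le₀ hL hL0.le])

lemma abs_sbNormalizer_sub_le {L : ℝ} (hL : 1 ≤ L) {n : ℕ} (hn : 0 < n) :
    |sbNormalizer n (1 - 1 / L) - 4 * ((1 - 1 / L) ^ 2 / (1 - (1 - 1 / L) ^ 2))| ≤
      20 * L ^ 2 / n := by
  have hinv := one_div_one_sub_one_sub_inv_sq_le hL
  set q := 1 - 1 / L
  have hL0 : 0 < L := by linarith
  have hn0 : (0 : ℝ) < n := by exact_mod_cast hn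
  have hq0 : 0 ≤ q := by linarith [div_le_one_of_le₀ hL hL0.le]
  have hq1 : q < 1 := by linarith [one_div_pos.2 hL0]
  have h1x0 : 0 < 1 - q ^ 2 := by nlinarith
  have hpow1 : n * q ^ n ≤ L := by
    simpa only [pow_one, Nat.factorial_one, Nat.cast_one, one_mul]
      using natCast_pow_mul_one_sub_inv_pow_le hL 1 n
  have hpow2 : n ^ 2 * q ^ n ≤ 2 * L ^ 2 := by
    simpa only [Nat.factorial_two, Nat.cast_ofNat]
      using natCast_pow_mul_one_sub_inv_pow_le hL 2 n
  have hseries (c : ℝ) (hc : 0 ≤ c) : c / n * (q ^ 2 / (1 - q ^ 2) ^ 2) ≤ c * L ^ 2 / n := by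
    rw [div_mul_eq_mul_div]
    gcongr
    calc q ^ 2 / (1 - q ^ 2) ^ 2 ≤ 1 / (1 - q ^ 2) ^ 2 := by
          gcongr; exact pow_le_one₀ hq0 hq1.le
      _ = (1 / (1 - q ^ 2)) ^ 2 := by rw [one_div_pow]
      _ ≤ L ^ 2 := by gcongr
  have htail : 4 * ((q ^ 2) ^ n / (1 - q ^ 2)) ≤ 4 * L ^ 2 / n := by
    have hqn : q ^ n ≤ L / n := by rw [le_div_iff₀ hn0]; linarith
    calc 4 * ((q ^ 2) ^ n / (1 - q ^ 2)) = 4 * ((q ^ 2) ^ n * (1 / (1 - q ^ 2))) := by ring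
      _ ≤ 4 * (q ^ n * L) := by
          gcongr
          nlinarith
      _ ≤ 4 * (L / n * L) := by gcongr
      _ = 4 * L ^ 2 / n := by ring
  have hcross : 8 * n * q ^ n ≤ 16 * L ^ 2 / n := by
    rw [le_div_iff₀ hn0]; linarith
  have hlow := sbNormalizer_ge hn hq0 hq1
  have hup := sbNormalizer_le hn hq0 hq1
  rw [sub_div] at hlow
  have h16 := hseries 16 (by norm_num)
  have h4 := hseries 4 (by norm_num)
  have h20 : 20 * L ^ 2 / n = 4 * L ^ 2 / n + 16 * L ^ 2 / n := by ring
  rw [abs_le]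
  constructor <;> linarith

lemma abs_sbNormalizer_div_sub_le {L : ℝ} (hL : 1 ≤ L) {n : ℕ} (hn : 0 < n) :
    |sbNormalizer n (1 - 1 / L) / L - 4 * (1 - 1 / L) ^ 2 / (2 - 1 / L)| ≤ 20 * (L / n) := by
  have hL0 : 0 < L := by linarith
  have hsplit : sbNormalizer n (1 - 1 / L) / L - 4 * (1 - 1 / L) ^ 2 / (2 - 1 / L) =
      (sbNormalizer n (1 - 1 / L) - 4 * ((1 - 1 / L) ^ 2 / (1 - (1 - 1 / L) ^ 2))) / L := by
    rw [one_sub_one_sub_inv_sq hL0.ne']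
    field_simp
  rw [hsplit, abs_div, abs_of_pos hL0, div_le_iff₀ hL0]
  calc _ ≤ 20 * L ^ 2 / n := abs_sbNormalizer_sub_le hL hn
    _ = 20 * (L / n) * L := by ring

/-- if `ℓ_n ≥ 1`, `ℓ_n → ∞` and `ℓ_n (log n)/n → 0`, then the stationary
bootstrap normalizer `A_n = ∑_{k=1}^{n-1} (2 q_{k,n})² (1 - k/n)²`, with `q = 1 - 1/ℓ_n`,
satisfies `A_n / ℓ_n → 2`. -/
theorem sb_normalizer_limit (ℓ : ℕ → ℝ) (hℓ1 : ∀ n, 1 ≤ ℓ n)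
    (hℓ : Tendsto ℓ atTop atTop)
    (hA3 : Tendsto (fun n : ℕ => ℓ n * Real.log n / (n : ℝ)) atTop (nhds 0)) :
    Tendsto (fun n : ℕ =>
        (∑ k ∈ Finset.Icc 1 (n - 1),
          (2 * sbWeight n (1 - 1 / ℓ n) k) ^ 2 * (1 - (k : ℝ) / (n : ℝ)) ^ 2) / ℓ n)
      atTop (nhds 2) := by
  have hℓ_div : Tendsto (fun n : ℕ => ℓ n / n) atTop (𝓝 0) :=
    tendsto_div_natCast_of_tendsto_mul_log_div (fun n => zero_le_one.trans (hℓ1 n)) hA3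
  have hinv : Tendsto (fun n => 1 / ℓ n) atTop (𝓝 0) :=
    hℓ.inv_tendsto_atTop.congr fun n => (one_div (ℓ n)).symm
  have hmain : Tendsto (fun n => 4 * (1 - 1 / ℓ n) ^ 2 / (2 - 1 / ℓ n)) atTop (𝓝 2) := by
    have h : Tendsto (fun n => 4 * (1 - 1 / ℓ n) ^ 2 / (2 - 1 / ℓ n)) atTop
        (𝓝 (4 * (1 - 0) ^ 2 / (2 - 0))) :=
      ((tendsto_const_nhds.sub hinv).pow 2 |>.const_mul 4).div (tendsto_const_nhds.sub hinv)
        (by norm_num)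
    rwa [show (4 : ℝ) * (1 - 0) ^ 2 / (2 - 0) = 2 by norm_num] at h
  have hdev : Tendsto (fun n => sbNormalizer n (1 - 1 / ℓ n) / ℓ n -
      4 * (1 - 1 / ℓ n) ^ 2 / (2 - 1 / ℓ n)) atTop (𝓝 0) := by
    refine squeeze_zero_norm' ?_ (by simpa using hℓ_div.const_mul 20)
    filter_upwards [eventually_gt_atTop 0] with n hn
    exact abs_sbNormalizer_div_sub_le (hℓ1 n) hn
  have h := hmain.add hdev
  rw [add_zero] at h
  exact h.congr fun n => add_sub_cancel _ _
end

section
/- For every n ≥ 2 and every q ∈ (0,1), the stationary bootstrap weights q_{k,n} = (1 − k/n)q^k + (k/n)q^{n−k}, 1 ≤ k ≤ n−1, satisfy ∑_{k=2}^{n−1} |q_{k,n} − q_{k−1,n}| ≤ 2. -/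
open Finset

section TotalVariation

variable {α : Type*} [AddCommGroup α] [LinearOrder α] [IsOrderedAddMonoid α]

theorem abs_add_sub_add_le_of_le_of_le {a a' b b' : α} (ha : a' ≤ a) (hb : b ≤ b') :
    |(a' + b') - (a + b)| ≤ (a - a') + (b' - b) := by
  calc |(a' + b') - (a + b)| = |(b' - b) - (a - a')| := by congr 1; abel
    _ ≤ |b' - b| + |a - a'| := abs_sub _ _
    _ = (a - a') + (b' - b) := by
      rw [abs_of_nonneg (sub_nonneg.2 hb), abs_of_nonneg (sub_nonneg.2 ha), add_comm]

theorem sum_Ioc_abs_sub_le_of_antitoneOn_add_monotoneOn {a b : ℕ → α} {m N : ℕ} (hmN : m ≤ N)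
    (ha : AntitoneOn a (Set.Icc m N)) (hb : MonotoneOn b (Set.Icc m N)) :
    ∑ k ∈ Ioc m N, |(a k + b k) - (a (k - 1) + b (k - 1))| ≤ (a m - a N) + (b N - b m) := by
  induction N, hmN using Nat.le_induction with
  | base => simp
  | succ N hmN ih =>
    have hsub : Set.Icc m N ⊆ Set.Icc m (N + 1) := Set.Icc_subset_Icc_right N.le_succ
    have hN : N ∈ Set.Icc m (N + 1) := ⟨hmN, N.le_succ⟩
    have hN1 : N + 1 ∈ Set.Icc m (N + 1) := ⟨hmN.trans N.le_succ, le_rfl⟩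
    rw [sum_Ioc_succ_top hmN, Nat.add_sub_cancel]
    calc _ ≤ ((a m - a N) + (b N - b m)) + ((a N - a (N + 1)) + (b (N + 1) - b N)) :=
          add_le_add (ih (ha.mono hsub) (hb.mono hsub))
            (abs_add_sub_add_le_of_le_of_le (ha hN hN1 N.le_succ) (hb hN hN1 N.le_succ))
      _ = (a m - a (N + 1)) + (b (N + 1) - b m) := by abel

end TotalVariation

noncomputable def sbDirect (n : ℕ) (q : ℝ) (k : ℕ) : ℝ := (1 - (k : ℝ) / n) * q ^ k

noncomputable def sbWrap (n : ℕ) (q : ℝ) (k : ℕ) : ℝ := ((k : ℝ) / n) * q ^ (n - k)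

theorem sbWeight_eq_sbDirect_add_sbWrap (n : ℕ) (q : ℝ) (k : ℕ) :
    sbWeight n q k = sbDirect n q k + sbWrap n q k := rfl

section Parts

variable {n : ℕ} {q : ℝ} {k : ℕ}

theorem natCast_div_le_one_of_le (hk : k ≤ n) : (k : ℝ) / n ≤ 1 :=
  div_le_one_of_le₀ (by exact_mod_cast hk) n.cast_nonneg

theorem sbDirect_mem_Icc (hq0 : 0 ≤ q) (hq1 : q ≤ 1) (hk : k ≤ n) :
    sbDirect n q k ∈ Set.Icc 0 1 :=
  ⟨mul_nonneg (sub_nonneg.2 (natCast_div_le_one_of_le hk)) (pow_nonneg hq0 k),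
    mul_le_one₀ (sub_le_self _ (by positivity)) (pow_nonneg hq0 k) (pow_le_one₀ hq0 hq1)⟩

theorem sbWrap_mem_Icc (hq0 : 0 ≤ q) (hq1 : q ≤ 1) (hk : k ≤ n) :
    sbWrap n q k ∈ Set.Icc 0 1 :=
  ⟨by unfold sbWrap; positivity,
    mul_le_one₀ (natCast_div_le_one_of_le hk) (pow_nonneg hq0 _) (pow_le_one₀ hq0 hq1)⟩

theorem sbDirect_antitoneOn (hq0 : 0 ≤ q) (hq1 : q ≤ 1) :
    AntitoneOn (sbDirect n q) (Set.Icc 0 n) := fun i hi j _ hij =>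
  mul_le_mul (sub_le_sub_left (by gcongr) 1) (pow_le_pow_of_le_one hq0 hq1 hij)
    (pow_nonneg hq0 j) (sub_nonneg.2 (natCast_div_le_one_of_le hi.2))

theorem sbWrap_monotoneOn (hq0 : 0 ≤ q) (hq1 : q ≤ 1) :
    MonotoneOn (sbWrap n q) (Set.Icc 0 n) := fun i _ j _ hij =>
  mul_le_mul (by gcongr) (pow_le_pow_of_le_one hq0 hq1 (by omega))
    (pow_nonneg hq0 _) (by positivity)

end Parts

/-- for every `n ≥ 2` and `q ∈ (0,1)`, the stationary bootstrap weights have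
total variation `∑_{k=2}^{n-1} |q_{k,n} - q_{k-1,n}| ≤ 2`. -/
theorem sb_weights_bounded_variation (n : ℕ) (hn : 2 ≤ n) (q : ℝ) (hq0 : 0 < q) (hq1 : q < 1) :
    (∑ k ∈ Finset.Icc 2 (n - 1), |sbWeight n q k - sbWeight n q (k - 1)|) ≤ 2 := by
  have hsub : Set.Icc 1 (n - 1) ⊆ Set.Icc 0 n :=
    Set.Icc_subset_Icc (Nat.zero_le _) (Nat.sub_le _ _)
  obtain ⟨-, hd1⟩ := sbDirect_mem_Icc hq0.le hq1.le (show 1 ≤ n by omega)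
  obtain ⟨hdn, -⟩ := sbDirect_mem_Icc hq0.le hq1.le (Nat.sub_le n 1)
  obtain ⟨hw1, -⟩ := sbWrap_mem_Icc hq0.le hq1.le (show 1 ≤ n by omega)
  obtain ⟨-, hwn⟩ := sbWrap_mem_Icc hq0.le hq1.le (Nat.sub_le n 1)
  simp only [sbWeight_eq_sbDirect_add_sbWrap]
  rw [show (2 : ℕ) = 1 + 1 from rfl, Icc_add_one_left_eq_Ioc]
  calc _ ≤ (sbDirect n q 1 - sbDirect n q (n - 1)) + (sbWrap n q (n - 1) - sbWrap n q 1) :=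
        sum_Ioc_abs_sub_le_of_antitoneOn_add_monotoneOn (by omega)
          ((sbDirect_antitoneOn hq0.le hq1.le).mono hsub)
          ((sbWrap_monotoneOn hq0.le hq1.le).mono hsub)
    _ ≤ 2 := by linarith
end
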